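/- Let U, V ⊆ ℝ^n be open connected sets with U ∪ V = ℝ^n. Then U ∩ V is connected. -/

import Mathlib

/-!
A locally constant `k : U ∩ V → {0, 1}` splits, with an Urysohn function `φ` for the disjoint
closed sets `Vᶜ` and `Uᶜ`, as `k = φ k - (φ - 1) k`, the two terms being continuous on `U` and on
`V`. Hence `z ↦ φ k mod 1` is a well-defined continuous map to the circle. On a simply connected
space it lifts to a real function `Γ`, and on the preconnected sets `U` and `V` the continuous
integer-valued differences `Γ - φ k` and `Γ - (φ - 1) k` are constant; subtracting them shows
that `k` is constant.
-/

open Set Filter Topology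

variable {X : Type*} [TopologicalSpace X]

theorem AddCircle.exists_lift [SimplyConnectedSpace X] [LocallyPathConnectedSpace X] {p : ℝ}
    (g : C(X, AddCircle p)) : ∃ G : C(X, ℝ), ∀ x, (G x : AddCircle p) = g x := by
  obtain ⟨x₀⟩ := (inferInstance : Nonempty X)
  obtain ⟨e₀, he₀⟩ := QuotientAddGroup.mk_surjective (g x₀)
  obtain ⟨G, ⟨-, hG⟩, -⟩ :=
    (AddCircle.isCoveringMap_coe p).existsUnique_continuousMap_lifts g x₀ e₀ he₀
  exact ⟨G, congrFun hG⟩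

theorem IsPreconnected.sub_eq_sub_of_coe_eq {p : ℝ} {S : Set X} (hS : IsPreconnected S)
    {F₁ F₂ : X → ℝ} (h₁ : ContinuousOn F₁ S) (h₂ : ContinuousOn F₂ S)
    (h : ∀ x ∈ S, (F₁ x : AddCircle p) = F₂ x) {x y : X} (hx : x ∈ S) (hy : y ∈ S) :
    F₁ x - F₂ x = F₁ y - F₂ y :=
  hS.constant_of_mapsTo (isDiscrete_iff_discreteTopology.mpr
    (inferInstanceAs (DiscreteTopology (AddSubgroup.zmultiples p)))) (h₁.sub h₂)
    (fun z hz => QuotientAddGroup.eq_iff_sub_mem.mp (h z hz)) hx hy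

theorem ContinuousAt.mul_of_apply_eq_zero {φ k : X → ℝ} {x : X} (hφ : ContinuousAt φ x)
    (hφx : φ x = 0) (hk : IsBoundedUnder (· ≤ ·) (𝓝 x) (fun y => ‖k y‖)) :
    ContinuousAt (fun y => φ y * k y) x := by
  have := (hφx ▸ hφ : Tendsto φ (𝓝 x) (𝓝 0)).zero_mul_isBoundedUnder_le hk
  simpa [ContinuousAt, hφx] using this

theorem exists_continuousOn_sub_eq_of_union_eq_univ [NormalSpace X] {U V : Set X}
    (hUo : IsOpen U) (hVo : IsOpen V) (huv : U ∪ V = univ) {k : X → ℝ}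
    (hk : ∀ x ∈ U ∩ V, ContinuousAt k x) (hbdd : ∃ C, ∀ x, ‖k x‖ ≤ C) :
    ∃ ψU ψV : X → ℝ, ContinuousOn ψU U ∧ ContinuousOn ψV V ∧ ∀ x, ψU x - ψV x = k x := by
  have hdisj : Disjoint Vᶜ Uᶜ := by
    rw [Set.disjoint_compl_left_iff_subset]
    exact Set.compl_subset_iff_union.mpr huv
  obtain ⟨φ, hφV, hφU, -⟩ :=
    exists_continuous_zero_one_of_isClosed hVo.isClosed_compl hUo.isClosed_compl hdisj
  have hkb : ∀ x, IsBoundedUnder (· ≤ ·) (𝓝 x) (fun y => ‖k y‖) := fun _ =>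
    isBoundedUnder_of hbdd
  refine ⟨fun x => φ x * k x, fun x => (φ x - 1) * k x, ?_, ?_, fun x => by ring⟩
  · refine fun x hx => ContinuousAt.continuousWithinAt ?_
    by_cases hxV : x ∈ V
    · exact φ.continuous.continuousAt.mul (hk x ⟨hx, hxV⟩)
    · exact φ.continuous.continuousAt.mul_of_apply_eq_zero (hφV hxV) (hkb x)
  · refine fun x hx => ContinuousAt.continuousWithinAt ?_
    by_cases hxU : x ∈ U
    · exact (φ.continuous.continuousAt.sub continuousAt_const).mul (hk x ⟨hxU, hx⟩)
    · exact (φ.continuous.continuousAt.sub continuousAt_const).mul_of_apply_eq_zero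
        (by simp [hφU hxU]) (hkb x)

theorem IsPreconnected.inter_of_union_eq_univ [NormalSpace X] [SimplyConnectedSpace X]
    [LocallyPathConnectedSpace X] {U V : Set X} (hUc : IsPreconnected U) (hVc : IsPreconnected V)
    (hUo : IsOpen U) (hVo : IsOpen V) (huv : U ∪ V = univ) :
    IsPreconnected (U ∩ V) := by
  refine isPreconnected_of_forall_constant fun f hf x hx y hy => ?_
  set k : X → ℝ := fun z => (f z).toNat
  have hk : ∀ z ∈ U ∩ V, ContinuousAt k z := fun z hz =>
    (continuous_of_discreteTopology (f := fun b : Bool => (b.toNat : ℝ)) |>.comp_continuousOn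
      hf).continuousAt ((hUo.inter hVo).mem_nhds hz)
  have hk_int : ∀ z, (k z : AddCircle (1 : ℝ)) = 0 := fun z =>
    QuotientAddGroup.eq_zero_iff _ |>.mpr ⟨(f z).toNat, by simp [k]⟩
  obtain ⟨ψU, ψV, hψU, hψV, hψ⟩ := exists_continuousOn_sub_eq_of_union_eq_univ hUo hVo huv hk
    ⟨1, fun z => by simpa [k] using Bool.toNat_le (f z)⟩
  have hψUV : ∀ z, (ψU z : AddCircle (1 : ℝ)) = ψV z := fun z => by
    rw [← sub_eq_zero, ← AddCircle.coe_sub, hψ, hk_int]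
  have hcont : Continuous fun z => (ψU z : AddCircle (1 : ℝ)) := by
    rw [← continuousOn_univ, ← huv]
    have hq := (AddCircle.isCoveringMap_coe (1 : ℝ)).continuous
    refine (hq.comp_continuousOn hψU).union_of_isOpen ?_ hUo hVo
    simpa only [Function.comp_def, hψUV] using hq.comp_continuousOn hψV
  obtain ⟨Γ, hΓ⟩ := AddCircle.exists_lift ⟨_, hcont⟩
  have hU := hUc.sub_eq_sub_of_coe_eq Γ.continuous.continuousOn hψU (fun z _ => hΓ z) hx.1 hy.1
  have hV := hVc.sub_eq_sub_of_coe_eq Γ.continuous.continuousOn hψV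
    (fun z _ => (hΓ z).trans (hψUV z)) hx.2 hy.2
  have : k x = k y := by linarith [hψ x, hψ y]
  cases hfx : f x <;> cases hfy : f y <;> simp_all [k]

/-- If `U, V ⊆ ℝⁿ` are open connected sets with `U ∪ V = ℝⁿ`, then `U ∩ V` is connected. -/
theorem inter_connected_of_union_univ (n : ℕ)
    (U V : Set (EuclideanSpace ℝ (Fin n))) (hUo : IsOpen U) (hVo : IsOpen V)
    (hUc : IsPreconnected U) (hVc : IsPreconnected V) (huv : U ∪ V = Set.univ) :
    IsPreconnected (U ∩ V) :=
  IsPreconnected.inter_of_union_eq_univ hUc hVc hUo hVo huv
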